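/- In the single-weight case ω_1 = ... = ω_L = ω ∈ [0,1] with T̃ = ∪_i T̃_i, the block cone constraint reduces to: ∑_{i∈Γᶜ}‖h[i]‖_2 ≤ ω ∑_{i∈Γ}‖h[i]‖_2 + (1−ω) ∑_{i∈(Γ∪T̃)\(T̃∩Γ)}‖h[i]‖_2 + 2(ω ∑_{j∈Γᶜ}‖x[j]‖_2 + (1−ω) ∑_{j∈T̃ᶜ∩Γᶜ}‖x[j]‖_2), whenever x̂ minimizes the weighted block ℓ1 norm subject to achieving a weighted norm no larger than x's. -/
import Mathlib


/-- The ℓ2 norm of the `i`-th block of `v`, for the block structure given by the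
block-assignment map `b : Fin N → Fin M`. -/
noncomputable def blkNorm {N M : ℕ} (b : Fin N → Fin M) (v : Fin N → ℝ) (i : Fin M) : ℝ :=
  Real.sqrt (∑ j ∈ Finset.univ.filter (fun j => b j = i), v j ^ 2)

lemma blkNorm_nonneg {N M : ℕ} (b : Fin N → Fin M) (v : Fin N → ℝ) (i : Fin M) :
    0 ≤ blkNorm b v i := Real.sqrt_nonneg _

lemma blkNorm_add_le {N M : ℕ} (b : Fin N → Fin M) (u v : Fin N → ℝ) (i : Fin M) :
    blkNorm b (u + v) i ≤ blkNorm b u i + blkNorm b v i := by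
  unfold blkNorm
  set s := Finset.univ.filter (fun j => b j = i)
  have hA : (0:ℝ) ≤ ∑ j ∈ s, u j ^ 2 := Finset.sum_nonneg fun _ _ => sq_nonneg _
  have hB : (0:ℝ) ≤ ∑ j ∈ s, v j ^ 2 := Finset.sum_nonneg fun _ _ => sq_nonneg _
  have hcs := Real.sum_mul_le_sqrt_mul_sqrt s u v
  have key : ∑ j ∈ s, (u + v) j ^ 2 ≤
      (Real.sqrt (∑ j ∈ s, u j ^ 2) + Real.sqrt (∑ j ∈ s, v j ^ 2)) ^ 2 := by
    have h1 : ∑ j ∈ s, (u + v) j ^ 2 =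
        (∑ j ∈ s, u j ^ 2) + 2 * (∑ j ∈ s, u j * v j) + (∑ j ∈ s, v j ^ 2) := by
      simp only [Pi.add_apply]
      rw [Finset.mul_sum, ← Finset.sum_add_distrib, ← Finset.sum_add_distrib]
      exact Finset.sum_congr rfl fun j _ => by ring
    rw [h1, add_sq, Real.sq_sqrt hA, Real.sq_sqrt hB]
    nlinarith [hcs]
  calc Real.sqrt (∑ j ∈ s, (u + v) j ^ 2)
      ≤ Real.sqrt ((Real.sqrt (∑ j ∈ s, u j ^ 2) + Real.sqrt (∑ j ∈ s, v j ^ 2)) ^ 2) :=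
        Real.sqrt_le_sqrt key
    _ = Real.sqrt (∑ j ∈ s, u j ^ 2) + Real.sqrt (∑ j ∈ s, v j ^ 2) :=
        Real.sqrt_sq (by positivity)

lemma blkNorm_neg {N M : ℕ} (b : Fin N → Fin M) (v : Fin N → ℝ) (i : Fin M) :
    blkNorm b (-v) i = blkNorm b v i := by
  unfold blkNorm; congr 1; exact Finset.sum_congr rfl fun j _ => by simp

theorem stmt_14 (N M : ℕ) (b : Fin N → Fin M)
    (x xhat : Fin N → ℝ) (T : Finset (Fin M)) (ω : ℝ)
    (hω0 : 0 ≤ ω) (hω1 : ω ≤ 1)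
    (hmin : ω * ∑ i ∈ T, blkNorm b xhat i + ∑ i ∈ Tᶜ, blkNorm b xhat i ≤
      ω * ∑ i ∈ T, blkNorm b x i + ∑ i ∈ Tᶜ, blkNorm b x i)
    (h : Fin N → ℝ) (hh : h = xhat - x) (Γ : Finset (Fin M)) :
    ∑ i ∈ Γᶜ, blkNorm b h i ≤
      ω * ∑ i ∈ Γ, blkNorm b h i +
      (1 - ω) * ∑ i ∈ (Γ ∪ T) \ (T ∩ Γ), blkNorm b h i +
      2 * (ω * ∑ j ∈ Γᶜ, blkNorm b x j + (1 - ω) * ∑ j ∈ Tᶜ ∩ Γᶜ, blkNorm b x j) := by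
  -- per-block reverse triangle inequalities
  have hxh : xhat = x + h := by rw [hh]; ring
  have hlow : ∀ i, blkNorm b x i - blkNorm b h i ≤ blkNorm b xhat i := by
    intro i
    have : blkNorm b x i ≤ blkNorm b xhat i + blkNorm b h i := by
      have := blkNorm_add_le b xhat (-h) i
      rw [blkNorm_neg] at this
      have hx : x = xhat + -h := by rw [hxh]; ring
      rw [hx]; exact this
    linarith
  have hlow' : ∀ i, blkNorm b h i - blkNorm b x i ≤ blkNorm b xhat i := by
    intro i
    have : blkNorm b h i ≤ blkNorm b xhat i + blkNorm b x i := by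
      have := blkNorm_add_le b xhat (-x) i
      rw [blkNorm_neg] at this
      have hx : h = xhat + -x := by rw [hh]; ring
      rw [hx]; exact this
    linarith
  -- region decompositions
  set η := blkNorm b h with hη
  set a := blkNorm b x with ha
  set ah := blkNorm b xhat with hah
  -- split sums into the four regions
  have hsplit : ∀ (s t : Finset (Fin M)) (f : Fin M → ℝ),
      ∑ i ∈ s, f i = ∑ i ∈ s ∩ t, f i + ∑ i ∈ s \ t, f i := by
    intro s t f
    have hd : Disjoint (s ∩ t) (s \ t) := by
      rw [Finset.disjoint_left]; intro j hj hj'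
      simp only [Finset.mem_inter, Finset.mem_sdiff] at hj hj'; tauto
    have hu : s ∩ t ∪ s \ t = s := by
      ext j; simp only [Finset.mem_union, Finset.mem_inter, Finset.mem_sdiff]; tauto
    rw [← Finset.sum_union hd, hu]
  have e1 : Γ ∩ T = T ∩ Γ := Finset.inter_comm Γ T
  have e2 : Γ \ T = Tᶜ ∩ Γ := by
    ext j; simp only [Finset.mem_sdiff, Finset.mem_inter, Finset.mem_compl]
    try tauto
  have e3 : Γᶜ ∩ T = T \ Γ := by
    ext j; simp only [Finset.mem_inter, Finset.mem_compl, Finset.mem_sdiff]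
    try tauto
  have e4 : Γᶜ \ T = Tᶜ \ Γ := by
    ext j; simp only [Finset.mem_sdiff, Finset.mem_compl]
    try tauto
  have e5 : Tᶜ ∩ Γᶜ = Tᶜ \ Γ := by
    ext j; simp only [Finset.mem_inter, Finset.mem_compl, Finset.mem_sdiff]
    try tauto
  have hTsplit : (∀ f : Fin M → ℝ, ∑ i ∈ T, f i = ∑ i ∈ T ∩ Γ, f i + ∑ i ∈ T \ Γ, f i) :=
    fun f => hsplit T Γ f
  have hTcsplit : (∀ f : Fin M → ℝ, ∑ i ∈ Tᶜ, f i = ∑ i ∈ Tᶜ ∩ Γ, f i + ∑ i ∈ Tᶜ \ Γ, f i) :=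
    fun f => hsplit Tᶜ Γ f
  have hΓsplit : (∀ f : Fin M → ℝ, ∑ i ∈ Γ, f i = ∑ i ∈ T ∩ Γ, f i + ∑ i ∈ Tᶜ ∩ Γ, f i) := by
    intro f; rw [hsplit Γ T f, e1, e2]
  have hΓcsplit : (∀ f : Fin M → ℝ, ∑ i ∈ Γᶜ, f i = ∑ i ∈ T \ Γ, f i + ∑ i ∈ Tᶜ \ Γ, f i) := by
    intro f; rw [hsplit Γᶜ T f, e3, e4]
  have hsym : (∀ f : Fin M → ℝ, ∑ i ∈ (Γ ∪ T) \ (T ∩ Γ), f i =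
      ∑ i ∈ Tᶜ ∩ Γ, f i + ∑ i ∈ T \ Γ, f i) := by
    intro f
    have hd : Disjoint (Tᶜ ∩ Γ) (T \ Γ) := by
      rw [Finset.disjoint_left]; intro j hj hj'
      simp only [Finset.mem_inter, Finset.mem_compl, Finset.mem_sdiff] at hj hj'; tauto
    have hu : (Γ ∪ T) \ (T ∩ Γ) = Tᶜ ∩ Γ ∪ T \ Γ := by
      ext j
      simp only [Finset.mem_sdiff, Finset.mem_union, Finset.mem_inter, Finset.mem_compl]
      tauto
    rw [hu, Finset.sum_union hd]
  have hTcΓc : (∀ f : Fin M → ℝ, ∑ i ∈ Tᶜ ∩ Γᶜ, f i = ∑ i ∈ Tᶜ \ Γ, f i) := by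
    intro f; rw [e5]
  -- sum-level bounds on each region
  have sb1 : ∑ i ∈ T ∩ Γ, (a i - η i) ≤ ∑ i ∈ T ∩ Γ, ah i :=
    Finset.sum_le_sum fun i _ => hlow i
  have sb2 : ∑ i ∈ T \ Γ, (η i - a i) ≤ ∑ i ∈ T \ Γ, ah i :=
    Finset.sum_le_sum fun i _ => hlow' i
  have sb3 : ∑ i ∈ Tᶜ ∩ Γ, (a i - η i) ≤ ∑ i ∈ Tᶜ ∩ Γ, ah i :=
    Finset.sum_le_sum fun i _ => hlow i
  have sb4 : ∑ i ∈ Tᶜ \ Γ, (η i - a i) ≤ ∑ i ∈ Tᶜ \ Γ, ah i :=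
    Finset.sum_le_sum fun i _ => hlow' i
  rw [Finset.sum_sub_distrib] at sb1 sb2 sb3 sb4
  -- rewrite hmin and goal in terms of regions
  rw [hTsplit ah, hTsplit a, hTcsplit ah, hTcsplit a] at hmin
  rw [hΓcsplit η, hΓsplit η, hsym η, hΓcsplit a, hTcΓc a]
  -- nonnegativity of η on T \ Γ
  have hη2 : 0 ≤ ∑ i ∈ T \ Γ, η i := Finset.sum_nonneg fun i _ => blkNorm_nonneg b h i
  nlinarith [hmin, sb1, sb2, sb3, sb4, hη2,
    mul_le_mul_of_nonneg_left (add_le_add sb1 sb2) hω0]
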